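/- Let x ∈ dom g and x⁺ := prox_{g/L}(x − (1/L)∇f(x)). Then there exists a vector s ∈ ∂F(x⁺) := {∇f(x⁺) + ξ : ξ ∈ ∂g(x⁺)} satisfying ‖s‖ ≤ 2L‖x − x⁺‖ = 2‖𝒢_{1/L}(x)‖; in particular dist(0, ∂F(x⁺)) ≤ 2‖𝒢_{1/L}(x)‖. -/
import Mathlib


noncomputable section

open Metric Set
open scoped RealInnerProductSpace

/-- `E d` is the Euclidean space `ℝ^d`. -/
abbrev E (d : ℕ) : Type := EuclideanSpace ℝ (Fin d)

/-- The convex subdifferential of `g : ℝ^d → ℝ` at `x`. -/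
def subdiff {d : ℕ} (g : E d → ℝ) (x : E d) : Set (E d) :=
  {v | ∀ y, g x + ⟪v, y - x⟫ ≤ g y}

lemma prox_subgrad {d : ℕ} (g : E d → ℝ) (hg : ConvexOn ℝ Set.univ g) (L : ℝ) (hL : 0 < L)
    (z p : E d)
    (hp : ∀ y, g p + L / 2 * ‖p - z‖ ^ 2 ≤ g y + L / 2 * ‖y - z‖ ^ 2) :
    L • (z - p) ∈ subdiff g p := by
  intro y
  have key : ∀ t : ℝ, t ∈ Set.Ioc (0:ℝ) 1 →
      ⟪L • (z - p), y - p⟫ - L * t / 2 * ‖y - p‖ ^ 2 ≤ g y - g p := by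
    intro t ht
    have h1 := hp (p + t • (y - p))
    have hconv := hg.2 (Set.mem_univ p) (Set.mem_univ y)
      (by linarith [ht.2] : (0:ℝ) ≤ 1 - t) (le_of_lt ht.1) (by ring)
    have heq : (1 - t) • p + t • y = p + t • (y - p) := by
      simp [smul_sub, sub_smul]; abel
    rw [heq] at hconv
    have expand : ‖p + t • (y - p) - z‖ ^ 2
        = ‖p - z‖ ^ 2 + 2 * (t * ⟪p - z, y - p⟫) + t ^ 2 * ‖y - p‖ ^ 2 := by
      have : p + t • (y - p) - z = (p - z) + t • (y - p) := by abel
      rw [this, norm_add_sq_real, real_inner_smul_right, norm_smul]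
      rw [mul_pow, Real.norm_eq_abs, sq_abs]
    rw [expand] at h1
    have hinner : ⟪L • (z - p), y - p⟫ = -(L * ⟪p - z, y - p⟫) := by
      rw [real_inner_smul_left]
      have : (z - p : E d) = -(p - z) := by abel
      rw [this, inner_neg_left]
      ring
    rw [hinner]
    simp only [smul_eq_mul] at hconv
    have h2 : 0 ≤ t * ((g y - g p) + L * ⟪p - z, y - p⟫ + L * t * ‖y - p‖ ^ 2 / 2) := by
      nlinarith
    have h3 := (mul_nonneg_iff_of_pos_left ht.1).mp h2
    linarith
  have tend : Filter.Tendsto (fun t : ℝ => ⟪L • (z - p), y - p⟫ - L * t / 2 * ‖y - p‖ ^ 2)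
      (nhdsWithin 0 (Set.Ioi 0)) (nhds (⟪L • (z - p), y - p⟫ - L * 0 / 2 * ‖y - p‖ ^ 2)) := by
    apply Filter.Tendsto.mono_left _ nhdsWithin_le_nhds
    exact (Continuous.tendsto (by continuity) 0)
  have hev : ∀ᶠ t in nhdsWithin (0:ℝ) (Set.Ioi 0),
      ⟪L • (z - p), y - p⟫ - L * t / 2 * ‖y - p‖ ^ 2 ≤ g y - g p := by
    filter_upwards [Ioc_mem_nhdsGT_of_mem (by simp : (0:ℝ) ∈ Set.Ico (0:ℝ) 1)] with t ht
    exact key t ht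
  have := le_of_tendsto tend hev
  simp only [mul_zero, zero_div, zero_mul, sub_zero, mul_comm] at this
  linarith [this]

/-- Subgradient residual bound at the proximal gradient update.
Let `x⁺ = prox x = prox_{g/L}(x − (1/L)∇f(x))` (the minimizer of the proximal
subproblem). Then there exists `s ∈ ∂F(x⁺) = {∇f(x⁺) + ξ | ξ ∈ ∂g(x⁺)}` with
`‖s‖ ≤ 2L‖x − x⁺‖ = 2‖𝒢_{1/L}(x)‖`, where `𝒢_{1/L}(x) = L(x − x⁺)`; in particular
`dist(0, ∂F(x⁺)) ≤ 2‖𝒢_{1/L}(x)‖`. -/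
theorem stmt_18 {d : ℕ} (f g : E d → ℝ) (f' prox : E d → E d) (L : ℝ)
    (hL : 0 < L)
    (hf' : ∀ x, HasGradientAt f (f' x) x)
    (hlip : ∀ x y, ‖f' x - f' y‖ ≤ L * ‖x - y‖)
    (hg : ConvexOn ℝ Set.univ g)
    (hprox : ∀ x y, g (prox x) + L / 2 * ‖prox x - (x - L⁻¹ • f' x)‖ ^ 2 ≤
      g y + L / 2 * ‖y - (x - L⁻¹ • f' x)‖ ^ 2) :
    ∀ x : E d,
      (∃ ξ ∈ subdiff g (prox x),
        ‖f' (prox x) + ξ‖ ≤ 2 * L * ‖x - prox x‖ ∧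
          2 * L * ‖x - prox x‖ = 2 * ‖L • (x - prox x)‖) ∧
      infDist 0 {t : E d | ∃ ξ ∈ subdiff g (prox x), t = f' (prox x) + ξ} ≤
        2 * ‖L • (x - prox x)‖ := by
  intro x
  set z : E d := x - L⁻¹ • f' x with hz
  set p : E d := prox x with hp
  have hsub : L • (z - p) ∈ subdiff g p :=
    prox_subgrad g hg L hL z p (fun y => hprox x y)
  have hxi : L • (z - p) = L • (x - p) - f' x := by
    have hLz : L • z = L • x - f' x := by
      rw [hz, smul_sub, smul_smul, mul_inv_cancel₀ (ne_of_gt hL), one_smul]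
    rw [smul_sub, hLz, smul_sub]
    abel
  have hnorm_eq : 2 * L * ‖x - p‖ = 2 * ‖L • (x - p)‖ := by
    rw [norm_smul, Real.norm_eq_abs, abs_of_pos hL]; ring
  have hbound : ‖f' p + L • (z - p)‖ ≤ 2 * L * ‖x - p‖ := by
    rw [hxi]
    have h1 : f' p + (L • (x - p) - f' x) = (f' p - f' x) + L • (x - p) := by abel
    rw [h1]
    calc ‖(f' p - f' x) + L • (x - p)‖ ≤ ‖f' p - f' x‖ + ‖L • (x - p)‖ := norm_add_le _ _
      _ ≤ L * ‖p - x‖ + L * ‖x - p‖ := by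
          have := hlip p x
          rw [norm_smul, Real.norm_eq_abs, abs_of_pos hL]
          linarith
      _ = 2 * L * ‖x - p‖ := by rw [norm_sub_rev]; ring
  refine ⟨⟨L • (z - p), hsub, hbound, hnorm_eq⟩, ?_⟩
  have hmem : f' p + L • (z - p) ∈
      {t : E d | ∃ ξ ∈ subdiff g (prox x), t = f' (prox x) + ξ} :=
    ⟨L • (z - p), hsub, rfl⟩
  calc infDist 0 {t : E d | ∃ ξ ∈ subdiff g (prox x), t = f' (prox x) + ξ}
      ≤ dist 0 (f' p + L • (z - p)) := infDist_le_dist_of_mem hmem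
    _ = ‖f' p + L • (z - p)‖ := by rw [dist_eq_norm, zero_sub, norm_neg]
    _ ≤ 2 * L * ‖x - p‖ := hbound
    _ = 2 * ‖L • (x - p)‖ := hnorm_eq
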